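/- (n(n-2)/√π)·∫₀^{∞} e^{-3x²}·erf(x)^{n-3} dx with n = 4 evaluates to 4√3/9, i.e. (8/√π)·∫₀^{∞} e^{-3x²}·erf(x) dx = 4√3/9. -/

import Mathlib

open Real MeasureTheory

/-- The error function. -/
noncomputable def erf (x : ℝ) : ℝ :=
  2 / Real.sqrt π * ∫ t in (0:ℝ)..x, Real.exp (-t^2)

/-!
Substituting `t = x s` gives `erf x = (2/√π) x ∫₀¹ exp (-x² s²) ds`. After swapping the order of
integration, the `x`-integral `∫₀^∞ x exp (-(c + s²) x²) dx = 1 / (2 (c + s²))` is elementary,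
leaving `(1/√π) ∫₀¹ ds / (c + s²) = arctan (1/√c) / √(π c)`; for `c = 3`, `arctan (1/√3) = π/6`.
-/

open Set Function

theorem integral_Ioi_mul_exp_neg_mul_sq {c : ℝ} (hc : 0 < c) :
    ∫ x in Ioi (0 : ℝ), x * exp (-c * x ^ 2) = (2 * c)⁻¹ := by
  exact_mod_cast integral_mul_cexp_neg_mul_sq (b := (c : ℂ)) (by simpa using hc)

theorem erf_eq_mul_integral (x : ℝ) :
    erf x = 2 / √π * x * ∫ s in (0 : ℝ)..1, exp (-(x * s) ^ 2) := by
  have h := intervalIntegral.mul_integral_comp_mul_left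
    (f := fun t => exp (-t ^ 2)) (a := 0) (b := 1) x
  simp only [mul_zero, mul_one] at h
  rw [erf, ← h, mul_assoc]

theorem exp_neg_mul_sq_mul_erf (c x : ℝ) :
    exp (-c * x ^ 2) * erf x = 2 / √π * ∫ s in (0 : ℝ)..1, x * exp (-(c + s ^ 2) * x ^ 2) := by
  rw [erf_eq_mul_integral, ← intervalIntegral.integral_const_mul,
    ← intervalIntegral.integral_const_mul, ← intervalIntegral.integral_const_mul]
  refine intervalIntegral.integral_congr fun s _ => ?_
  rw [← mul_assoc, mul_comm (exp _), mul_assoc _ (exp _), ← exp_add]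
  ring_nf

theorem integrable_mul_exp_neg_mul_sq_prod {c : ℝ} (hc : 0 < c) :
    Integrable (uncurry fun x s : ℝ => x * exp (-(c + s ^ 2) * x ^ 2))
      ((volume.restrict (Ioi 0)).prod (volume.restrict (Ioc 0 1))) := by
  have hbound := ((integrable_mul_exp_neg_mul_sq hc).norm.restrict (s := Ioi 0)).mul_prod
    (integrableOn_const (s := Ioc (0 : ℝ) 1) (C := (1 : ℝ)) (measure_Ioc_lt_top (μ := volume)).ne)
  refine hbound.mono' (by fun_prop) (ae_of_all _ fun p => ?_)
  simp only [uncurry, norm_mul, norm_of_nonneg (exp_pos _).le, mul_one]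
  gcongr
  nlinarith [mul_nonneg (sq_nonneg p.2) (sq_nonneg p.1)]

theorem integral_exp_neg_mul_sq_mul_erf {c : ℝ} (hc : 0 < c) :
    ∫ x in Ioi (0 : ℝ), exp (-c * x ^ 2) * erf x = arctan (√c)⁻¹ / (√π * √c) := by
  have hsc : √c ≠ 0 := (sqrt_pos.2 hc).ne'
  have inner : ∀ s ∈ Ioc (0 : ℝ) 1, ∫ x in Ioi (0 : ℝ), x * exp (-(c + s ^ 2) * x ^ 2)
      = 2⁻¹ * (√c ^ 2 + s ^ 2)⁻¹ := fun s _ => by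
    rw [integral_Ioi_mul_exp_neg_mul_sq (by positivity), sq_sqrt hc.le, mul_inv]
  simp_rw [exp_neg_mul_sq_mul_erf c, intervalIntegral.integral_of_le zero_le_one]
  rw [integral_const_mul, integral_integral_swap (integrable_mul_exp_neg_mul_sq_prod hc),
    setIntegral_congr_fun measurableSet_Ioc inner, integral_const_mul,
    ← intervalIntegral.integral_of_le zero_le_one, integral_inv_sq_add_sq hsc]
  field_simp
  simp

theorem stmt_15 :
    8 / Real.sqrt π * (∫ x in Set.Ioi (0:ℝ), Real.exp (-3 * x^2) * erf x)
      = 4 * Real.sqrt 3 / 9 := by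
  have h3 : arctan (√3)⁻¹ = π / 6 := by
    rw [← one_div, ← tan_pi_div_six, arctan_tan] <;> linarith [pi_pos]
  have hπ : √π ^ 2 = π := sq_sqrt pi_pos.le
  have hs3 : √3 ^ 2 = 3 := sq_sqrt (by norm_num)
  rw [integral_exp_neg_mul_sq_mul_erf (by norm_num), h3]
  field_simp
  nlinarith [pi_pos]
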